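/- For p = 2 and n = 6, the necklace element x_{112122} in S(gl_N)^{⊗2} is not fixed by the orientation-reversal involution τ_S when N ≥ 4: τ_S(x_{112122}) = x_{112212} ≠ x_{112122}. -/

import Mathlib

open MvPolynomial

/-- The necklace element `x_μ` of a 2-colored necklace `μ` of order `n` in `S(gl_N)^{⊗2}`,
the latter modelled as the polynomial algebra on two copies of the basis `e_{ij}` of `gl_N`:
variable `(s, i, j)` is the generator `e_{ij}` in tensor slot `s`. -/
noncomputable def neck (F : Type) [Field F] (N n : ℕ) (hn : 0 < n) (μ : ℕ → Fin 2) :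
    MvPolynomial (Fin 2 × Fin N × Fin N) F :=
  ∑ i : Fin n → Fin N, ∏ m : Fin n,
    X (μ m.val, i m, i ⟨(m.val + 1) % n, Nat.mod_lt _ hn⟩)

/-- The orientation-reversal involution `τ_S`, induced by the algebra map of `S(gl_N)^{⊗2}`
sending `e_{ij} ↦ e_{ji}` in each slot. -/
noncomputable def tauS (F : Type) [Field F] (N : ℕ) :
    MvPolynomial (Fin 2 × Fin N × Fin N) F →ₐ[F] MvPolynomial (Fin 2 × Fin N × Fin N) F :=
  rename fun q => (q.1, q.2.2, q.2.1)

/-- The color sequence `112122` (colors in `{1,2}` written as `{0,1}`). -/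
def c112122 : ℕ → Fin 2 := fun m => ![0, 0, 1, 0, 1, 1] ⟨m % 6, Nat.mod_lt _ (by omega)⟩

/-- The color sequence `112212`. -/
def c112212 : ℕ → Fin 2 := fun m => ![0, 0, 1, 1, 0, 1] ⟨m % 6, Nat.mod_lt _ (by omega)⟩

/-!
Reversing a closed walk `i` of length `n` (vertices `i ↦ -i`, edges `m ↦ n - 1 - m`) shows that
`τ_S(x_μ)` is the necklace of the reversed word; the reverse `221211` of `112122` is a rotation of
`112212`, and rotations do not change `x_μ`.

Evaluating the generator `e_{ij}` of slot `s` at the entry `(A_s)_{ij}` of a matrix `A_s` sends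
`x_μ` to `tr (A_{μ_0} ⋯ A_{μ_{n-1}})`. For three distinct indices `a, b, c`, the matrices
`A = E_{ab} + E_{bc}` and `B = E_{ab} + E_{ca}` give `tr (AABBAB) = 1` but `tr (AABABB) = 0`.
-/

namespace Matrix

variable {ι R : Type*} [Fintype ι] [DecidableEq ι]

section CommSemiring

variable [CommSemiring R]

theorem trace_list_ofFn_prod_mul (n : ℕ) (M : Fin n → Matrix ι ι R) (B : Matrix ι ι R) :
    trace ((List.ofFn M).prod * B) =
      ∑ i : Fin (n + 1) → ι,
        (∏ m, M m (i m.castSucc) (i m.succ)) * B (i (Fin.last n)) (i 0) := by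
  induction n generalizing B with
  | zero =>
    rw [← (Equiv.funUnique (Fin 1) ι).symm.sum_comp]
    simp [trace]
  | succ n ih =>
    -- cycle `M 0` past the trace so that the induction hypothesis applies with `B * M 0`
    rw [List.ofFn_succ, List.prod_cons, Matrix.mul_assoc, trace_mul_comm, Matrix.mul_assoc, ih,
      ← (Fin.consEquiv fun _ : Fin (n + 2) => ι).sum_comp, Fintype.sum_prod_type,
      Finset.sum_comm]
    refine Finset.sum_congr rfl fun j _ => ?_
    simp only [mul_apply, Finset.mul_sum, Fin.consEquiv_apply, Fin.cons_succ, Fin.prod_univ_succ,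
      Fin.castSucc_zero, Fin.cons_zero, Fin.castSucc_succ, Fin.cons_last]
    exact Finset.sum_congr rfl fun c _ => by ring

theorem trace_list_ofFn_prod (n : ℕ) (M : Fin (n + 1) → Matrix ι ι R) :
    trace (List.ofFn M).prod = ∑ i : Fin (n + 1) → ι, ∏ m, M m (i m) (i (m + 1)) := by
  rw [List.ofFn_succ', List.prod_concat, trace_list_ofFn_prod_mul]
  simp [Fin.prod_univ_castSucc, Fin.coeSucc_eq_succ]

end CommSemiring

theorem exists_trace_aabbab_ne_trace_aababb [Semiring R] [Nontrivial R] {a b c : ι}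
    (hab : a ≠ b) (hbc : b ≠ c) (hca : c ≠ a) :
    ∃ A B : Matrix ι ι R, trace [A, A, B, B, A, B].prod ≠ trace [A, A, B, A, B, B].prod := by
  refine ⟨single a b 1 + single b c 1, single a b 1 + single c a 1, ?_⟩
  simp [add_mul, mul_add, hab, hbc, hca, hab.symm, hbc.symm, hca.symm]

end Matrix

section Necklace

variable {F : Type} [Field F] {N n : ℕ}

theorem neck_succ (hn : 0 < n + 1) (μ : ℕ → Fin 2) :
    neck F N (n + 1) hn μ =
      ∑ i : Fin (n + 1) → Fin N, ∏ m : Fin (n + 1), X (μ m, i m, i (m + 1)) := by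
  unfold neck
  congr! with i _ m _
  rw [Fin.val_add, Fin.val_one', Nat.add_mod_mod]

theorem neck_congr (hn : 0 < n) {μ ν : ℕ → Fin 2} (h : ∀ m < n, μ m = ν m) :
    neck F N n hn μ = neck F N n hn ν := by
  unfold neck
  congr! 4 with i _ m _
  exact h m m.isLt

theorem neck_rotate (hn : 0 < n) (μ : ℕ → Fin 2) (r : ℕ) :
    neck F N n hn (fun m => μ ((m + r) % n)) = neck F N n hn μ := by
  obtain ⟨n, rfl⟩ : ∃ k, n = k + 1 := ⟨n - 1, by omega⟩
  rw [neck_succ, neck_succ]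
  refine Fintype.sum_equiv ((Equiv.addRight (Fin.ofNat (n + 1) r)).arrowCongr (Equiv.refl _)) _ _
    fun i => Fintype.prod_equiv (Equiv.addRight (Fin.ofNat (n + 1) r)) _ _ fun m => ?_
  simp [Fin.val_add, add_right_comm]

theorem tauS_neck (hn : 0 < n) (μ : ℕ → Fin 2) :
    tauS F N (neck F N n hn μ) = neck F N n hn (fun m => μ (n - 1 - m)) := by
  obtain ⟨n, rfl⟩ : ∃ k, n = k + 1 := ⟨n - 1, by omega⟩
  rw [neck_succ, neck_succ, tauS, map_sum]
  refine Fintype.sum_equiv ((Equiv.neg (Fin (n + 1))).arrowCongr (Equiv.refl _)) _ _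
    fun i => ?_
  rw [map_prod]
  refine Fintype.prod_equiv Fin.revPerm _ _ fun m => ?_
  simp only [rename_X, Equiv.arrowCongr_apply, Equiv.coe_refl, Function.comp_apply, Equiv.neg_symm,
    Equiv.neg_apply, Fin.revPerm_apply]
  have hrev : m.rev = -1 - m := by
    rw [← Fin.last_sub]
    congr 1
    ext
    simp
  have hμ : n + 1 - 1 - (m.rev : ℕ) = m := by
    rw [Fin.val_rev]; omega
  rw [hμ, id, id, hrev, show -(-1 - m) = m + 1 by abel, show -(-1 - m + 1) = m by abel]

theorem eval_neck (hn : 0 < n) (A : Fin 2 → Matrix (Fin N) (Fin N) F) (μ : ℕ → Fin 2) :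
    eval (fun q => A q.1 q.2.1 q.2.2) (neck F N n hn μ) =
      Matrix.trace (List.ofFn fun m : Fin n => A (μ m)).prod := by
  obtain ⟨n, rfl⟩ : ∃ k, n = k + 1 := ⟨n - 1, by omega⟩
  rw [neck_succ, Matrix.trace_list_ofFn_prod]
  simp

end Necklace

/-- For `N ≥ 4`, `τ_S(x_{112122}) = x_{112212} ≠ x_{112122}` in `S(gl_N)^{⊗2}`. -/
theorem necklace112122_not_invariant (F : Type) [Field F] (N : ℕ) (hN : 4 ≤ N) :
    tauS F N (neck F N 6 (by omega) c112122) = neck F N 6 (by omega) c112212 ∧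
    neck F N 6 (by omega) c112212 ≠ neck F N 6 (by omega) c112122 := by
  constructor
  · rw [tauS_neck, ← neck_rotate _ _ 4]
    exact neck_congr _ (by decide)
  · obtain ⟨A, B, hAB⟩ := Matrix.exists_trace_aabbab_ne_trace_aababb (R := F)
      (a := (⟨0, by omega⟩ : Fin N)) (b := ⟨1, by omega⟩) (c := ⟨2, by omega⟩)
      (by simp) (by simp) (by simp)
    refine fun h => hAB ?_
    simpa [eval_neck, List.ofFn_succ, c112122, c112212] using
      congrArg (eval fun q => ![A, B] q.1 q.2.1 q.2.2) h
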